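/- arXiv:0802.1006 — 4 statements merged into one kernel-verified Lean document; each statement's English description precedes it below -/
import Mathlib

section
/- Let p be a prime and R a commutative ring in which p·1 = 0. Let f : F → G be a homomorphism of formal group laws over R whose linear coefficient is zero. Then there exists a unique power series g ∈ R[[T]] with constant term 0 such that f(T) = g(T^p), and this g is a homomorphism of formal group laws F^{(p)} → G, i.e. g(F^{(p)}(X,Y)) = G(g(X), g(Y)) in R[[X,Y]]. -/
namespace FGL

variable {R : Type*} [CommRing R]

/-- `subst2 F a b` is the substitution `F(a,b)` of the power series `a`, `b`
(with zero constant term) into the two-variable power series `F`. -/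
noncomputable def subst2 {σ : Type*} (F : MvPowerSeries (Fin 2) R)
    (a b : MvPowerSeries σ R) : MvPowerSeries σ R :=
  fun d =>
    ∑ ij ∈ Finset.range ((d.sum fun _ k => k) + 1) ×ˢ
        Finset.range ((d.sum fun _ k => k) + 1),
      MvPowerSeries.coeff (Finsupp.single 0 ij.1 + Finsupp.single 1 ij.2) F *
        MvPowerSeries.coeff d (a ^ ij.1 * b ^ ij.2)

/-- `subst1 f G` is the substitution `f(G)` of the power series `G`
(with zero constant term) into the one-variable power series `f`. -/
noncomputable def subst1 {σ : Type*} (f : PowerSeries R) (G : MvPowerSeries σ R) :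
    MvPowerSeries σ R :=
  fun d =>
    ∑ n ∈ Finset.range ((d.sum fun _ k => k) + 1),
      PowerSeries.coeff n f * MvPowerSeries.coeff d (G ^ n)

/-- Composition `f(g)` of one-variable power series (`g` with zero constant term). -/
noncomputable def pcomp (f g : PowerSeries R) : PowerSeries R := subst1 f g

/-- A formal group law over `R`: a two-variable power series `F(X,Y)` with
`F(X,0) = X`, `F(0,Y) = Y`, `F(X,Y) = F(Y,X)` and `F(F(X,Y),Z) = F(X,F(Y,Z))`. -/
structure IsFGL (F : MvPowerSeries (Fin 2) R) : Prop where
  unit_left : subst2 F (MvPowerSeries.X 0) 0 = MvPowerSeries.X 0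
  unit_right : subst2 F 0 (MvPowerSeries.X 1) = MvPowerSeries.X 1
  comm : subst2 F (MvPowerSeries.X 1) (MvPowerSeries.X 0) = F
  assoc : subst2 F (subst2 F (MvPowerSeries.X 0) (MvPowerSeries.X 1))
        (MvPowerSeries.X 2 : MvPowerSeries (Fin 3) R)
      = subst2 F (MvPowerSeries.X 0) (subst2 F (MvPowerSeries.X 1) (MvPowerSeries.X 2))

/-- A homomorphism `f : F → G` of formal group laws: a one-variable power series with
zero constant term such that `f(F(X,Y)) = G(f(X), f(Y))`. -/
structure IsHom (F G : MvPowerSeries (Fin 2) R) (f : PowerSeries R) : Prop where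
  const : PowerSeries.constantCoeff f = 0
  hom : subst1 f F =
    subst2 G (subst1 f (MvPowerSeries.X 0)) (subst1 f (MvPowerSeries.X 1))

/-- The coefficientwise Frobenius twist `F^{(p)}`. -/
noncomputable def frob (p : ℕ) (F : MvPowerSeries (Fin 2) R) : MvPowerSeries (Fin 2) R :=
  fun d => (MvPowerSeries.coeff d F) ^ p

/-- The one-variable power series `F_Y(X,0)`, whose coefficient of `X^n` is the
coefficient of `X^n Y` in `F`. -/
noncomputable def FY0 (F : MvPowerSeries (Fin 2) R) : PowerSeries R :=
  PowerSeries.mk fun n =>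
    MvPowerSeries.coeff (Finsupp.single 0 n + Finsupp.single 1 1) F

/-- The formal partial derivative `F_X(X,Y)` with respect to the first variable. -/
noncomputable def FX (F : MvPowerSeries (Fin 2) R) : MvPowerSeries (Fin 2) R :=
  fun d => ((d 0 + 1 : ℕ) : R) * MvPowerSeries.coeff (d + Finsupp.single 0 1) F

/-- The `n`-series `[n]_F` of a formal group law, defined by `[0]_F = 0` and
`[n+1]_F(X) = F([n]_F(X), X)`. -/
noncomputable def nSeries (F : MvPowerSeries (Fin 2) R) : ℕ → PowerSeries R
  | 0 => 0
  | n + 1 => subst2 F (nSeries F n) PowerSeries.X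

/-!
Differentiating `f(F(X,Y)) = G(f(X), f(Y))` in `Y` at `Y = 0` gives
`f'(X) · F_Y(X,0) = G_Y(f(X),0) · f'(0) = 0`. As `F_Y(X,0)` has constant term `1`, `f' = 0`, i.e.
`m f_m = 0` for all `m`, so `f_m = 0` unless `p ∣ m` and `f(T) = g(T^p)`. In characteristic `p`,
`F(X,Y)^p = F^{(p)}(X^p,Y^p)`, so expanding `T ↦ T^p` turns `g(F^{(p)})` into `f(F)` and
`G(g(X), g(Y))` into `G(f(X), f(Y))`; expansion is injective.
-/

open MvPowerSeries Finset Finsupp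

lemma coeff_subst1 {σ : Type*} (f : PowerSeries R) (A : MvPowerSeries σ R) (d : σ →₀ ℕ) :
    coeff d (subst1 f A) = ∑ n ∈ range (d.degree + 1), PowerSeries.coeff n f * coeff d (A ^ n) :=
  rfl

lemma coeff_subst2 {σ : Type*} (F : MvPowerSeries (Fin 2) R) (a b : MvPowerSeries σ R)
    (d : σ →₀ ℕ) :
    coeff d (subst2 F a b) = ∑ ij ∈ range (d.degree + 1) ×ˢ range (d.degree + 1),
      coeff (single 0 ij.1 + single 1 ij.2) F * coeff d (a ^ ij.1 * b ^ ij.2) :=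
  rfl

lemma constantCoeff_subst1 {σ : Type*} (f : PowerSeries R) (A : MvPowerSeries σ R) :
    constantCoeff (subst1 f A) = PowerSeries.constantCoeff f := by
  rw [← coeff_zero_eq_constantCoeff_apply, coeff_subst1]
  simp

lemma coeff_pow_mul_pow_eq_zero {σ : Type*} {a b : MvPowerSeries σ R}
    (ha : constantCoeff a = 0) (hb : constantCoeff b = 0) {i j : ℕ} {d : σ →₀ ℕ}
    (h : d.degree < i + j) : coeff d (a ^ i * b ^ j) = 0 := by
  refine coeff_of_lt_order (lt_of_lt_of_le ?_ le_order_mul)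
  calc (d.degree : ℕ∞) < i + j := by exact_mod_cast h
    _ ≤ _ := add_le_add (le_order_pow_of_constantCoeff_eq_zero i ha)
      (le_order_pow_of_constantCoeff_eq_zero j hb)

lemma coeff_subst2_eq_sum_of_degree_le {σ : Type*} (F : MvPowerSeries (Fin 2) R)
    {a b : MvPowerSeries σ R} (ha : constantCoeff a = 0) (hb : constantCoeff b = 0)
    {d : σ →₀ ℕ} {N : ℕ} (hN : d.degree ≤ N) :
    coeff d (subst2 F a b) = ∑ ij ∈ range (N + 1) ×ˢ range (N + 1),
      coeff (single 0 ij.1 + single 1 ij.2) F * coeff d (a ^ ij.1 * b ^ ij.2) := by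
  rw [coeff_subst2]
  refine sum_subset (product_subset_product ?_ ?_) fun ij _ hij => ?_ <;>
    try exact range_subset_range.mpr (by omega)
  rw [coeff_pow_mul_pow_eq_zero ha hb, mul_zero]
  simp only [mem_product, mem_range, not_and_or, not_lt] at hij
  omega

lemma sum_range_ite_dvd {M : Type*} [AddCommMonoid M] {p : ℕ} (hp : p ≠ 0) (n : ℕ)
    (φ : ℕ → M) :
    ∑ m ∈ range (n + 1), (if p ∣ m then φ (m / p) else 0) = ∑ k ∈ range (n / p + 1), φ k := by
  rw [← sum_filter]
  refine sum_nbij' (· / p) (p * ·) ?_ ?_ ?_ ?_ fun _ _ => rfl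
  · intro m hm
    simp only [mem_filter, mem_range] at hm ⊢
    exact Nat.lt_succ_of_le (Nat.div_le_div_right (Nat.le_of_lt_succ hm.1))
  · intro k hk
    simp only [mem_filter, mem_range, dvd_mul_right, and_true] at hk ⊢
    exact Nat.lt_succ_of_le (mul_comm k p ▸ Nat.mul_le_of_le_div p k n (Nat.le_of_lt_succ hk))
  · intro m hm
    exact Nat.mul_div_cancel' (mem_filter.mp hm).2
  · intro k _
    exact Nat.mul_div_cancel_left k (Nat.pos_of_ne_zero hp)

lemma degree_nsmul_div {σ : Type*} {p : ℕ} (hp : p ≠ 0) (d : σ →₀ ℕ) :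
    (p • d).degree / p = d.degree := by
  rw [map_nsmul, smul_eq_mul, Nat.mul_div_cancel_left _ (Nat.pos_of_ne_zero hp)]

section Expand

variable {p : ℕ} (hp : p ≠ 0)

lemma exists_eq_nsmul_of_forall_dvd {σ : Type*} {e : σ →₀ ℕ} (he : ∀ i, p ∣ e i) :
    ∃ d, e = p • d :=
  ⟨e.mapRange (· / p) (Nat.zero_div p), by ext i; simp [Nat.mul_div_cancel' (he i)]⟩

lemma eq_expand_of_coeff {σ : Type*} {A B : MvPowerSeries σ R}
    (hsmul : ∀ d, coeff (p • d) A = coeff d B) (hndvd : ∀ e i, ¬ p ∣ e i → coeff e A = 0) :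
    A = expand p hp B := by
  ext e
  by_cases he : ∀ i, p ∣ e i
  · obtain ⟨d, rfl⟩ := exists_eq_nsmul_of_forall_dvd he
    rw [hsmul, coeff_expand_smul]
  · push Not at he
    obtain ⟨i, hi⟩ := he
    rw [hndvd e i hi, coeff_expand_of_not_dvd p hp B hi]

lemma expand_injective {σ : Type*} :
    Function.Injective (expand p hp : MvPowerSeries σ R → MvPowerSeries σ R) := fun A B h => by
  ext d
  rw [← coeff_expand_smul p hp A, h, coeff_expand_smul]

lemma _root_.PowerSeries.expand_injective :
    Function.Injective (PowerSeries.expand p hp : PowerSeries R → PowerSeries R) :=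
  fun A B h => by
  ext n
  rw [← PowerSeries.coeff_expand_mul p hp A, h, PowerSeries.coeff_expand_mul]

lemma subst1_expand_of_pow_eq {σ : Type*} (g : PowerSeries R) {A B : MvPowerSeries σ R}
    (h : A ^ p = expand p hp B) :
    subst1 (PowerSeries.expand p hp g) A = expand p hp (subst1 g B) := by
  have key : ∀ e, coeff e (subst1 (PowerSeries.expand p hp g) A) =
      ∑ k ∈ range (e.degree / p + 1), PowerSeries.coeff k g * coeff e (expand p hp (B ^ k)) := by
    intro e
    rw [coeff_subst1, ← sum_range_ite_dvd hp]
    refine sum_congr rfl fun m _ => ?_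
    rw [PowerSeries.coeff_expand]
    split_ifs with hm
    · rw [map_pow (expand p hp), ← h, ← pow_mul, Nat.mul_div_cancel' hm]
    · rw [zero_mul]
  refine eq_expand_of_coeff hp (fun d => ?_) fun e i hi => ?_
  · rw [key, degree_nsmul_div hp, coeff_subst1]
    simp only [coeff_expand_smul]
  · rw [key]
    exact sum_eq_zero fun k _ => by rw [coeff_expand_of_not_dvd p hp _ hi, mul_zero]

lemma subst2_expand (G : MvPowerSeries (Fin 2) R) {σ : Type*} {a b : MvPowerSeries σ R}
    (ha : constantCoeff a = 0) (hb : constantCoeff b = 0) :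
    subst2 G (expand p hp a) (expand p hp b) = expand p hp (subst2 G a b) := by
  have key : ∀ e, coeff e (subst2 G (expand p hp a) (expand p hp b)) =
      ∑ ij ∈ range (e.degree + 1) ×ˢ range (e.degree + 1),
        coeff (single 0 ij.1 + single 1 ij.2) G * coeff e (expand p hp (a ^ ij.1 * b ^ ij.2)) := by
    intro e
    simp only [coeff_subst2, map_mul, map_pow]
  refine eq_expand_of_coeff hp (fun d => ?_) fun e i hi => ?_
  · rw [key, coeff_subst2_eq_sum_of_degree_le G ha hb (N := (p • d).degree)]
    · simp only [coeff_expand_smul]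
    · rw [map_nsmul, smul_eq_mul]
      exact Nat.le_mul_of_pos_left _ (Nat.pos_of_ne_zero hp)
  · rw [key]
    exact sum_eq_zero fun k _ => by rw [coeff_expand_of_not_dvd p hp _ hi, mul_zero]

end Expand

lemma frob_eq_map (p : ℕ) [ExpChar R p] {F : MvPowerSeries (Fin 2) R} :
    frob p F = map (frobenius R p) F := by
  ext d; rfl

lemma pow_eq_expand_frob {p : ℕ} (hp : p.Prime) (hpR : (p : R) = 0)
    (A : MvPowerSeries (Fin 2) R) : A ^ p = expand p hp.ne_zero (frob p A) := by
  rcases subsingleton_or_nontrivial R with _ | _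
  · ext; exact Subsingleton.elim _ _
  have : CharP R p := (CharP.charP_iff_prime_eq_zero hp).mpr hpR
  have : ExpChar R p := ExpChar.prime hp
  rw [frob_eq_map, ← map_expand, map_frobenius_expand]

lemma pcomp_X_pow {p : ℕ} (hp : p ≠ 0) (g : PowerSeries R) :
    pcomp g (PowerSeries.X ^ p) = PowerSeries.expand p hp g := by
  ext n
  have hterm : ∀ m, coeff (single () n) ((PowerSeries.X ^ p) ^ m : PowerSeries R) =
      if n = p * m then 1 else 0 := fun m => by
    rw [← pow_mul]; exact PowerSeries.coeff_X_pow n (p * m)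
  change coeff (single () n) (subst1 g (PowerSeries.X ^ p)) = _
  rw [coeff_subst1, PowerSeries.coeff_expand, degree_single]
  simp only [hterm, mul_ite, mul_one, mul_zero]
  split_ifs with h
  · obtain ⟨k, rfl⟩ := h
    have hk : k < p * k + 1 := Nat.lt_succ_of_le (Nat.le_mul_of_pos_left k (Nat.pos_of_ne_zero hp))
    simp [Nat.mul_left_cancel_iff (Nat.pos_of_ne_zero hp), hk, Nat.pos_of_ne_zero hp]
  · exact sum_eq_zero fun m _ => if_neg fun hm => h ⟨m, hm⟩

lemma exists_eq_expand {p : ℕ} (hp : p ≠ 0) {f : PowerSeries R}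
    (hf : ∀ m, ¬ p ∣ m → PowerSeries.coeff m f = 0) :
    ∃ g, f = PowerSeries.expand p hp g := by
  refine ⟨PowerSeries.mk fun k => PowerSeries.coeff (p * k) f, ?_⟩
  ext n
  rw [PowerSeries.coeff_expand]
  split_ifs with h
  · rw [PowerSeries.coeff_mk, Nat.mul_div_cancel' h]
  · exact hf n h

noncomputable def evalYZero : MvPowerSeries (Fin 2) R →+* PowerSeries R where
  toFun A := PowerSeries.mk fun n => coeff (single 0 n) A
  map_one' := by ext n; simp [coeff_one, PowerSeries.coeff_one]
  map_mul' A B := by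
    ext n
    simp [coeff_mul, PowerSeries.coeff_mul, antidiagonal_single, sum_map]
  map_zero' := by ext n; simp
  map_add' A B := by ext n; simp

@[simp]
lemma coeff_evalYZero (A : MvPowerSeries (Fin 2) R) (n : ℕ) :
    PowerSeries.coeff n (evalYZero A) = coeff (single 0 n) A :=
  PowerSeries.coeff_mk n fun n => coeff (single 0 n) A

lemma coeff_evalYZero_pderiv (A : MvPowerSeries (Fin 2) R) (n : ℕ) :
    PowerSeries.coeff n (evalYZero (pderiv R 1 A)) = coeff (single 0 n + single 1 1) A := by
  simp [coeff_pderiv]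

lemma evalYZero_pderiv (F : MvPowerSeries (Fin 2) R) :
    evalYZero (pderiv R 1 F) = FY0 F := by
  ext n; simp [coeff_pderiv, FY0]

lemma coeff_subst2_X_zero {σ : Type*} (F : MvPowerSeries (Fin 2) R) (s : σ) (n : ℕ) :
    coeff (single s n) (subst2 F (X s) (0 : MvPowerSeries σ R)) = coeff (single 0 n) F := by
  classical
  rw [coeff_subst2, degree_single, sum_product]
  simp [zero_pow_eq, apply_ite (coeff _), coeff_X_pow, (single_injective s).eq_iff, mul_ite]

lemma coeff_subst2_zero_X {σ : Type*} (F : MvPowerSeries (Fin 2) R) (s : σ) (n : ℕ) :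
    coeff (single s n) (subst2 F (0 : MvPowerSeries σ R) (X s)) = coeff (single 1 n) F := by
  classical
  rw [coeff_subst2, degree_single, sum_product]
  simp [zero_pow_eq, apply_ite (coeff _), coeff_X_pow, (single_injective s).eq_iff, mul_ite]

lemma evalYZero_eq_X {F : MvPowerSeries (Fin 2) R} (hF : IsFGL F) :
    evalYZero F = PowerSeries.X := by
  ext n
  rw [coeff_evalYZero, ← coeff_subst2_X_zero F 0, hF.unit_left]
  simp [coeff_X, PowerSeries.coeff_X, (single_injective _).eq_iff]

lemma coeff_single_one_one {F : MvPowerSeries (Fin 2) R} (hF : IsFGL F) :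
    coeff (single 1 1) F = 1 := by
  rw [← coeff_subst2_zero_X F 1, hF.unit_right, coeff_X, if_pos rfl]

lemma coeff_XnY_pow {F : MvPowerSeries (Fin 2) R} (hF : IsFGL F) (m n : ℕ) :
    coeff (single 0 n + single 1 1) (F ^ m) =
      m * PowerSeries.coeff n (PowerSeries.X ^ (m - 1) * FY0 F) := by
  rw [← coeff_evalYZero_pderiv, pderiv_pow, map_mul evalYZero, map_mul evalYZero,
    map_pow evalYZero, map_natCast,
    evalYZero_eq_X hF, evalYZero_pderiv, ← map_natCast (PowerSeries.C (R := R)), mul_assoc,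
    PowerSeries.coeff_C_mul]

lemma coeff_XnY_subst1 {F : MvPowerSeries (Fin 2) R} (hF : IsFGL F) (f : PowerSeries R)
    (n : ℕ) :
    coeff (single 0 n + single 1 1) (subst1 f F) =
      PowerSeries.coeff n (PowerSeries.derivative R f * FY0 F) := by
  rw [coeff_subst1, map_add, degree_single, degree_single, sum_range_succ', PowerSeries.coeff_mul,
    Nat.sum_antidiagonal_eq_sum_range_succ_mk, pow_zero, coeff_one,
    if_neg (ne_of_apply_ne (· 1) (by simp)), mul_zero, add_zero]
  refine sum_congr rfl fun k hk => ?_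
  rw [coeff_XnY_pow hF, PowerSeries.coeff_X_pow_mul', Nat.add_sub_cancel,
    if_pos (Nat.le_of_lt_succ (mem_range.mp hk)), PowerSeries.coeff_derivative]
  push_cast
  ring

lemma coeff_XnY_subst2_eq_zero (G : MvPowerSeries (Fin 2) R) {f : PowerSeries R}
    (hf1 : PowerSeries.coeff 1 f = 0) (n : ℕ) :
    coeff (single 0 n + single 1 1 : Fin 2 →₀ ℕ)
      (subst2 G (subst1 f (X 0)) (subst1 f (X 1))) = 0 := by
  have hX0 : evalYZero (pderiv R 1 (subst1 f (X 0))) = 0 := by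
    ext m
    rw [coeff_evalYZero_pderiv, coeff_subst1, map_zero]
    refine sum_eq_zero fun k _ => ?_
    rw [coeff_X_pow, if_neg (ne_of_apply_ne (· 1) (by simp)), mul_zero]
  have hX1 : evalYZero (pderiv R 1 (subst1 f (X 1))) = 0 := by
    ext m
    rw [coeff_evalYZero_pderiv, coeff_subst1, map_zero]
    refine sum_eq_zero fun k _ => ?_
    rw [coeff_X_pow]
    split_ifs with h
    · obtain rfl : k = 1 := by simpa using congr($h 1).symm
      rw [hf1, zero_mul]
    · rw [mul_zero]
  rw [coeff_subst2]
  refine sum_eq_zero fun ij _ => ?_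
  rw [← coeff_evalYZero_pderiv]
  -- `A ↦ (∂A/∂Y)(X, 0)` is a derivation over `evalYZero`, so it kills `a ^ i * b ^ j`.
  simp [Derivation.leibniz, Derivation.leibniz_pow, hX0, hX1]

lemma derivative_eq_zero_of_isHom {F G : MvPowerSeries (Fin 2) R} (hF : IsFGL F)
    {f : PowerSeries R} (hf : IsHom F G f) (hf1 : PowerSeries.coeff 1 f = 0) :
    PowerSeries.derivative R f = 0 := by
  have hunit : IsUnit (FY0 F) := by
    rw [PowerSeries.isUnit_iff_constantCoeff, ← PowerSeries.coeff_zero_eq_constantCoeff_apply, FY0,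
      PowerSeries.coeff_mk, single_zero, zero_add, coeff_single_one_one hF]
    exact isUnit_one
  refine hunit.mul_left_eq_zero.mp (PowerSeries.ext fun n => ?_)
  rw [← coeff_XnY_subst1 hF, hf.hom, coeff_XnY_subst2_eq_zero G hf1, map_zero]

lemma isUnit_natCast_of_not_dvd {p m : ℕ} (hp : p.Prime) (hpR : (p : R) = 0) (hm : ¬ p ∣ m) :
    IsUnit (m : R) := by
  have hcop : IsCoprime (m : ℤ) p :=
    Nat.isCoprime_iff_coprime.mpr ((hp.coprime_iff_not_dvd.mpr hm).symm)
  exact isCoprime_zero_right.mp (by simpa [hpR] using hcop.map (Int.castRingHom R))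

lemma coeff_eq_zero_of_not_dvd {p : ℕ} (hp : p.Prime) (hpR : (p : R) = 0)
    {F G : MvPowerSeries (Fin 2) R} (hF : IsFGL F) {f : PowerSeries R} (hf : IsHom F G f)
    (hf1 : PowerSeries.coeff 1 f = 0) {m : ℕ} (hm : ¬ p ∣ m) : PowerSeries.coeff m f = 0 := by
  obtain ⟨n, rfl⟩ : ∃ n, m = n + 1 :=
    Nat.exists_eq_succ_of_ne_zero (by rintro rfl; exact hm (dvd_zero p))
  have := congr(PowerSeries.coeff n $(derivative_eq_zero_of_isHom hF hf hf1))
  rw [PowerSeries.coeff_derivative, map_zero] at this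
  exact (isUnit_natCast_of_not_dvd hp hpR hm).mul_left_eq_zero.mp (by exact_mod_cast this)

theorem statement0_general (p : ℕ) (hp : p.Prime) (R : Type*) [CommRing R] (hpR : (p : R) = 0)
    (F G : MvPowerSeries (Fin 2) R) (hF : IsFGL F)
    (f : PowerSeries R) (hf : IsHom F G f) (hf1 : PowerSeries.coeff 1 f = 0) :
    ∃ g : PowerSeries R,
      (PowerSeries.constantCoeff g = 0 ∧ f = pcomp g (PowerSeries.X ^ p) ∧
        IsHom (frob p F) G g) ∧
      ∀ g' : PowerSeries R,
        PowerSeries.constantCoeff g' = 0 → f = pcomp g' (PowerSeries.X ^ p) → g' = g := by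
  have hp0 := hp.ne_zero
  obtain ⟨g, rfl⟩ : ∃ g, f = PowerSeries.expand p hp0 g :=
    exists_eq_expand hp0 fun m hm => coeff_eq_zero_of_not_dvd hp hpR hF hf hf1 hm
  have hg0 : PowerSeries.constantCoeff g = 0 := by simpa using hf.const
  refine ⟨g, ⟨hg0, (pcomp_X_pow hp0 g).symm, hg0, ?_⟩, fun g' _ hg' => ?_⟩
  · have hgX (i : Fin 2) : constantCoeff (subst1 g (X i : MvPowerSeries (Fin 2) R)) = 0 := by
      rw [constantCoeff_subst1, hg0]
    apply expand_injective hp0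
    rw [← subst2_expand hp0 G (hgX 0) (hgX 1),
      ← subst1_expand_of_pow_eq hp0 g (expand_X p hp0 0).symm,
      ← subst1_expand_of_pow_eq hp0 g (expand_X p hp0 1).symm, ← hf.hom,
      subst1_expand_of_pow_eq hp0 g (pow_eq_expand_frob hp hpR F)]
  · exact PowerSeries.expand_injective hp0 (by rw [← pcomp_X_pow hp0 g', ← hg'])

/-- Let `p` be a prime and `R` a commutative ring with `p·1 = 0`.  If `f : F → G` is a
homomorphism of formal group laws over `R` whose linear coefficient vanishes, then there is a
unique power series `g` with zero constant term such that `f(T) = g(T^p)`, and this `g` is a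
homomorphism of formal group laws `F^{(p)} → G`. -/
theorem statement0 (p : ℕ) (hp : p.Prime) (R : Type*) [CommRing R] (hpR : (p : R) = 0)
    (F G : MvPowerSeries (Fin 2) R) (hF : IsFGL F) (hG : IsFGL G)
    (f : PowerSeries R) (hf : IsHom F G f) (hf1 : PowerSeries.coeff 1 f = 0) :
    ∃ g : PowerSeries R,
      (PowerSeries.constantCoeff g = 0 ∧ f = pcomp g (PowerSeries.X ^ p) ∧
        IsHom (frob p F) G g) ∧
      ∀ g' : PowerSeries R,
        PowerSeries.constantCoeff g' = 0 → f = pcomp g' (PowerSeries.X ^ p) → g' = g :=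
  statement0_general p hp R hpR F G hF f hf hf1

end FGL
end

section
/- Let R be a commutative ℚ-algebra and F a formal group law over R. Then there exists a unique power series ℓ ∈ R[[X]] with constant term 0 and linear coefficient 1 such that ℓ(F(X,Y)) = ℓ(X) + ℓ(Y) in R[[X,Y]]. In other words, over a ℚ-algebra every formal group law is strictly isomorphic to the additive formal group law G_a(X,Y) = X + Y. -/
namespace FGL

variable {R : Type*} [CommRing R]

/-!
Over a `ℚ`-algebra the logarithm `ℓ` is built coefficient by coefficient so that `ℓ(F(X,Y))`
has no monomials `X Y^n` with `n ≥ 1`. The defect `E = ℓ(F(X,Y)) - ℓ(X) - ℓ(Y)` then vanishes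
on both axes and, by associativity, satisfies the cocycle identity
`E(F(X,Y),Z) + E(X,Y) = E(X,F(Y,Z)) + E(Y,Z)`. If the terms of `E` of degree `< n` vanish,
then in degree `n` one may replace `F(X,Y)` by `X + Y`, and the coefficient of `X Y^(a-1) Z^b`
gives `a E_{a,b} = binom(a+b-1, a-1) E_{1,a+b-1} = 0`; hence `E = 0`. For uniqueness, the
coefficient of `X Y^(m+1)` in `f(F(X,Y)) = f(X) + f(Y)` expresses `(m + 2) f_(m+2)` through
the lower coefficients of `f`.
-/

open MvPowerSeries Finset
open Finsupp (single)

section Order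

variable {σ : Type*}

lemma constantCoeff_eq_zero_of_order_sub {a b : MvPowerSeries σ R} (ha : constantCoeff a = 0)
    (hab : 2 ≤ (a - b).order) : constantCoeff b = 0 := by
  have hab' : constantCoeff (a - b) = 0 :=
    one_le_order_iff_constCoeff_eq_zero.1 (le_trans (by norm_num) hab)
  rw [map_sub, ha, zero_sub, neg_eq_zero] at hab'
  exact hab'

lemma le_order_pow_mul_pow {a b : MvPowerSeries σ R} (ha : constantCoeff a = 0)
    (hb : constantCoeff b = 0) (i j : ℕ) : (i + j : ℕ∞) ≤ (a ^ i * b ^ j).order :=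
  le_trans (add_le_add (le_order_pow_of_constantCoeff_eq_zero i ha)
    (le_order_pow_of_constantCoeff_eq_zero j hb)) le_order_mul

lemma le_order_pow_sub_pow {a b : MvPowerSeries σ R} (ha : constantCoeff a = 0)
    (hab : 2 ≤ (a - b).order) (n : ℕ) : (n + 1 : ℕ∞) ≤ (a ^ n - b ^ n).order := by
  have hb := constantCoeff_eq_zero_of_order_sub ha hab
  induction n with
  | zero => simp
  | succ k ih =>
    have hsplit : a ^ (k + 1) - b ^ (k + 1) = a ^ 1 * (a ^ k - b ^ k) + (a - b) * b ^ k := by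
      ring
    rw [hsplit]
    refine le_trans (le_min ?_ ?_) min_order_le_add
    · calc ((k + 1 : ℕ) : ℕ∞) + 1 = (1 : ℕ) + ((k : ℕ∞) + 1) := by push_cast; ring
        _ ≤ _ := le_trans (add_le_add (le_order_pow_of_constantCoeff_eq_zero 1 ha) ih)
            le_order_mul
    · calc ((k + 1 : ℕ) : ℕ∞) + 1 = 2 + (k : ℕ∞) := by push_cast; ring
        _ ≤ _ := le_trans (add_le_add hab (le_order_pow_of_constantCoeff_eq_zero k hb))
            le_order_mul

lemma coeff_pow_mul_pow_congr {a a' b b' : MvPowerSeries σ R} (ha : constantCoeff a = 0)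
    (haa' : 2 ≤ (a - a').order) (hb : constantCoeff b = 0) (hbb' : 2 ≤ (b - b').order)
    {d : σ →₀ ℕ} {i j : ℕ} (hd : d.degree ≤ i + j) :
    coeff d (a ^ i * b ^ j) = coeff d (a' ^ i * b' ^ j) := by
  have ha' := constantCoeff_eq_zero_of_order_sub ha haa'
  have hsplit : a ^ i * b ^ j - a' ^ i * b' ^ j
      = (a ^ i - a' ^ i) * b ^ j + a' ^ i * (b ^ j - b' ^ j) := by ring
  have hord : (i + j + 1 : ℕ∞) ≤ (a ^ i * b ^ j - a' ^ i * b' ^ j).order := by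
    rw [hsplit]
    refine le_trans (le_min ?_ ?_) min_order_le_add
    · calc (i + j + 1 : ℕ∞) = (i + 1 : ℕ∞) + j := by ring
        _ ≤ _ := le_trans (add_le_add (le_order_pow_sub_pow ha haa' i)
            (le_order_pow_of_constantCoeff_eq_zero j hb)) le_order_mul
    · calc (i + j + 1 : ℕ∞) = i + (j + 1 : ℕ∞) := by ring
        _ ≤ _ := le_trans (add_le_add (le_order_pow_of_constantCoeff_eq_zero i ha')
            (le_order_pow_sub_pow hb hbb' j)) le_order_mul
  rw [← sub_eq_zero, ← map_sub]
  exact coeff_of_lt_order (lt_of_lt_of_le (by exact_mod_cast Nat.lt_succ_of_le hd) hord)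

end Order

section Substitution

variable {σ : Type*}

lemma hasSubst_fin_two {a b : MvPowerSeries σ R} (ha : constantCoeff a = 0)
    (hb : constantCoeff b = 0) : HasSubst ![a, b] :=
  hasSubst_of_constantCoeff_zero (Fin.forall_fin_two.2 ⟨ha, hb⟩)

theorem coeff_subst_eq_sum_range (f : PowerSeries R) {G : MvPowerSeries σ R}
    (hG : constantCoeff G = 0) {d : σ →₀ ℕ} {N : ℕ} (hN : d.degree ≤ N) :
    coeff d (f.subst G) = ∑ n ∈ range (N + 1), PowerSeries.coeff n f * coeff d (G ^ n) := by
  rw [PowerSeries.coeff_subst (PowerSeries.HasSubst.of_constantCoeff_zero hG),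
    finsum_eq_sum_of_support_subset _ (s := range (N + 1))]
  · simp only [smul_eq_mul]
  · intro n hn
    rw [Function.mem_support] at hn
    simp only [coe_range, Set.mem_Iio]
    by_contra! hle
    refine hn ?_
    rw [coeff_of_lt_order (lt_of_lt_of_le (by exact_mod_cast Nat.lt_of_le_of_lt hN hle)
      (le_order_pow_of_constantCoeff_eq_zero n hG)), smul_zero]

theorem coeff_subst_fin_two (P : MvPowerSeries (Fin 2) R) {a b : MvPowerSeries σ R}
    (ha : constantCoeff a = 0) (hb : constantCoeff b = 0) {d : σ →₀ ℕ} {N : ℕ}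
    (hN : d.degree ≤ N) :
    coeff d (P.subst ![a, b]) = ∑ ij ∈ range (N + 1) ×ˢ range (N + 1),
      coeff (single 0 ij.1 + single 1 ij.2) P * coeff d (a ^ ij.1 * b ^ ij.2) := by
  have hprod : ∀ u : Fin 2 →₀ ℕ, (u.prod fun s e => ![a, b] s ^ e) = a ^ u 0 * b ^ u 1 := by
    intro u
    rw [Finsupp.prod_fintype _ _ (fun _ => pow_zero _), Fin.prod_univ_two]
    rfl
  have hu : ∀ u : Fin 2 →₀ ℕ, u = single 0 (u 0) + single 1 (u 1) := by
    intro u; ext s; fin_cases s <;> simp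
  rw [coeff_subst (hasSubst_fin_two ha hb), finsum_eq_sum_of_support_subset _
    (s := (range (N + 1) ×ˢ range (N + 1)).image fun ij => single 0 ij.1 + single 1 ij.2)]
  · rw [sum_image]
    · refine Finset.sum_congr rfl fun ij _ => ?_
      rw [hprod, smul_eq_mul]
      simp
    · intro x _ y _ hxy
      exact Prod.ext (by simpa using congrArg (· 0) hxy) (by simpa using congrArg (· 1) hxy)
  · intro u hu'
    rw [Function.mem_support, hprod] at hu'
    have hdeg : u 0 + u 1 ≤ d.degree := by
      by_contra! hlt
      refine hu' ?_
      rw [coeff_of_lt_order (lt_of_lt_of_le (by exact_mod_cast hlt)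
        (le_order_pow_mul_pow ha hb _ _)), smul_zero]
    simp only [coe_image, coe_product, coe_range, Set.mem_image, Set.mem_prod, Set.mem_Iio]
    exact ⟨(u 0, u 1), ⟨by omega, by omega⟩, (hu u).symm⟩

lemma constantCoeff_subst_X_X {F : MvPowerSeries (Fin 2) R} (hF : constantCoeff F = 0)
    (i j : σ) : constantCoeff (F.subst ![(X i : MvPowerSeries σ R), X j]) = 0 :=
  constantCoeff_subst_eq_zero HasSubst.X_X (by simp) hF

theorem subst1_eq_subst (f : PowerSeries R) {G : MvPowerSeries σ R}
    (hG : constantCoeff G = 0) : subst1 f G = f.subst G := by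
  ext d
  exact (coeff_subst_eq_sum_range f hG le_rfl).symm

theorem subst2_eq_subst (P : MvPowerSeries (Fin 2) R) {a b : MvPowerSeries σ R}
    (ha : constantCoeff a = 0) (hb : constantCoeff b = 0) : subst2 P a b = P.subst ![a, b] := by
  ext d
  exact (coeff_subst_fin_two P ha hb le_rfl).symm

theorem coeff_subst_congr (P : MvPowerSeries (Fin 2) R) {n : ℕ} (hP : n ≤ P.order)
    {a a' b b' : MvPowerSeries σ R} (ha : constantCoeff a = 0) (haa' : 2 ≤ (a - a').order)
    (hb : constantCoeff b = 0) (hbb' : 2 ≤ (b - b').order) {d : σ →₀ ℕ}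
    (hd : d.degree ≤ n) :
    coeff d (P.subst ![a, b]) = coeff d (P.subst ![a', b']) := by
  have ha' := constantCoeff_eq_zero_of_order_sub ha haa'
  have hb' := constantCoeff_eq_zero_of_order_sub hb hbb'
  rw [coeff_subst_fin_two P ha hb hd, coeff_subst_fin_two P ha' hb' hd]
  refine Finset.sum_congr rfl fun ij _ => ?_
  rcases lt_or_ge (ij.1 + ij.2) n with hlt | hle
  · have hdeg : ((single 0 ij.1 + single 1 ij.2 : Fin 2 →₀ ℕ).degree : ℕ∞) < n := by
      simpa [Finsupp.degree_single] using mod_cast hlt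
    rw [coeff_of_lt_order (lt_of_lt_of_le hdeg hP), zero_mul, zero_mul]
  · rw [coeff_pow_mul_pow_congr ha haa' hb hbb' (le_trans hd hle)]

end Substitution

section LinearSubstitution

variable {σ : Type*}

lemma single_add_single_add_single_inj {s t u : σ} (hst : s ≠ t) (hsu : s ≠ u) (htu : t ≠ u)
    {a b c a' b' c' : ℕ}
    (h : single s a + single t b + single u c = single s a' + single t b' + single u c') :
    a = a' ∧ b = b' ∧ c = c' := by
  refine ⟨?_, ?_, ?_⟩
  · simpa [Finsupp.single_apply, hst, hsu] using congrArg (· s) h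
  · simpa [Finsupp.single_apply, hst.symm, htu] using congrArg (· t) h
  · simpa [Finsupp.single_apply, hsu.symm, htu.symm] using congrArg (· u) h

lemma X_add_X_pow_mul_X_pow (s t u : σ) (i j : ℕ) :
    (X s + X t : MvPowerSeries σ R) ^ i * X u ^ j =
      ∑ k ∈ range (i + 1),
        monomial (single s k + single t (i - k) + single u j) (i.choose k : R) := by
  rw [add_pow, Finset.sum_mul]
  refine Finset.sum_congr rfl fun k _ => ?_
  rw [← map_natCast (C (σ := σ) (R := R)), X_pow_eq, X_pow_eq, X_pow_eq, mul_comm _ (C _),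
    mul_assoc, mul_assoc, ← monomial_zero_eq_C_apply, monomial_mul_monomial,
    monomial_mul_monomial, monomial_mul_monomial]
  simp [add_assoc]

lemma coeff_X_add_X_pow_mul_X_pow {s t u : σ} (hst : s ≠ t) (hsu : s ≠ u) (htu : t ≠ u)
    (a b c i j : ℕ) :
    coeff (single s a + single t b + single u c) ((X s + X t : MvPowerSeries σ R) ^ i * X u ^ j) =
      if a + b = i ∧ c = j then (i.choose a : R) else 0 := by
  classical
  rw [X_add_X_pow_mul_X_pow, map_sum]
  simp_rw [coeff_monomial]
  split_ifs with h
  · obtain ⟨rfl, rfl⟩ := h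
    rw [sum_eq_single a]
    · rw [if_pos (by rw [Nat.add_sub_cancel_left])]
    · intro k _ hk
      exact if_neg fun he => hk (single_add_single_add_single_inj hst hsu htu he).1.symm
    · intro ha
      simp at ha
  · refine sum_eq_zero fun k hk => if_neg fun he => h ?_
    obtain ⟨rfl, hb, hc⟩ := single_add_single_add_single_inj hst hsu htu he
    simp only [mem_range] at hk
    exact ⟨by omega, hc⟩

lemma coeff_subst_X_add_X_X {s t u : σ} (hst : s ≠ t) (hsu : s ≠ u) (htu : t ≠ u)
    (P : MvPowerSeries (Fin 2) R) (a b c : ℕ) :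
    coeff (single s a + single t b + single u c) (P.subst ![X s + X t, X u]) =
      (a + b).choose a * coeff (single 0 (a + b) + single 1 c) P := by
  rw [coeff_subst_fin_two P (by simp) (constantCoeff_X u) (N := a + b + c)
    (by simp [Finsupp.degree_single]), sum_eq_single (a + b, c)]
  · rw [coeff_X_add_X_pow_mul_X_pow hst hsu htu, if_pos ⟨rfl, rfl⟩, mul_comm]
  · rintro ⟨i, j⟩ _ hne
    rw [coeff_X_add_X_pow_mul_X_pow hst hsu htu, if_neg, mul_zero]
    rintro ⟨rfl, rfl⟩
    exact hne rfl
  · intro h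
    simp only [mem_product, mem_range, not_and_or] at h
    omega

lemma coeff_subst_X_X_add_X {s t u : σ} (hst : s ≠ t) (hsu : s ≠ u) (htu : t ≠ u)
    (P : MvPowerSeries (Fin 2) R) (a b c : ℕ) :
    coeff (single s a + single t b + single u c) (P.subst ![X u, X s + X t]) =
      (a + b).choose a * coeff (single 0 c + single 1 (a + b)) P := by
  rw [coeff_subst_fin_two P (constantCoeff_X u) (by simp) (N := a + b + c)
    (by simp [Finsupp.degree_single]), sum_eq_single (c, a + b)]
  · rw [mul_comm (X u ^ _), coeff_X_add_X_pow_mul_X_pow hst hsu htu, if_pos ⟨rfl, rfl⟩,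
      mul_comm]
  · rintro ⟨i, j⟩ _ hne
    rw [mul_comm (X u ^ _), coeff_X_add_X_pow_mul_X_pow hst hsu htu, if_neg, mul_zero]
    rintro ⟨rfl, rfl⟩
    exact hne rfl
  · intro h
    simp only [mem_product, mem_range, not_and_or] at h
    omega

lemma coeff_subst_X_X_of_ne {s t u : σ} (hsu : s ≠ u) (htu : t ≠ u)
    (P : MvPowerSeries (Fin 2) R) {d : σ →₀ ℕ} (hd : d u ≠ 0) :
    coeff d (P.subst ![(X s : MvPowerSeries σ R), X t]) = 0 := by
  classical
  rw [coeff_subst_fin_two P (constantCoeff_X s) (constantCoeff_X t) le_rfl]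
  refine sum_eq_zero fun ij _ => ?_
  rw [X_pow_eq, X_pow_eq, monomial_mul_monomial, coeff_monomial, if_neg, mul_zero]
  rintro rfl
  simp [hsu, htu] at hd

lemma coeff_subst_X_zero (s : σ) (P : MvPowerSeries (Fin 2) R) (n : ℕ) :
    coeff (single s n) (P.subst ![X s, 0]) = coeff (single 0 n) P := by
  classical
  rw [coeff_subst_fin_two P (constantCoeff_X s) (map_zero _) (N := n)
    (by simp [Finsupp.degree_single]), sum_eq_single (n, 0)]
  · simp [coeff_X_pow]
  · rintro ⟨i, _ | j⟩ _ hne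
    · rw [pow_zero, mul_one, coeff_X_pow, if_neg, mul_zero]
      intro h
      exact hne (by simpa using (Finsupp.single_injective s h).symm)
    · rw [zero_pow (Nat.succ_ne_zero j), mul_zero, map_zero, mul_zero]
  · intro h
    simp at h

lemma coeff_subst_zero_X (t : σ) (P : MvPowerSeries (Fin 2) R) (n : ℕ) :
    coeff (single t n) (P.subst ![0, X t]) = coeff (single 1 n) P := by
  classical
  rw [coeff_subst_fin_two P (map_zero _) (constantCoeff_X t) (N := n)
    (by simp [Finsupp.degree_single]), sum_eq_single (0, n)]
  · simp [coeff_X_pow]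
  · rintro ⟨_ | i, j⟩ _ hne
    · rw [pow_zero, one_mul, coeff_X_pow, if_neg, mul_zero]
      intro h
      exact hne (by simpa using (Finsupp.single_injective t h).symm)
    · rw [zero_pow (Nat.succ_ne_zero i), zero_mul, map_zero, mul_zero]
  · intro h
    simp at h

end LinearSubstitution

lemma IsFGL.coeff_single_zero {F : MvPowerSeries (Fin 2) R} (hF : IsFGL F) (n : ℕ) :
    coeff (single 0 n) F = if n = 1 then 1 else 0 := by
  classical
  rw [← coeff_subst_X_zero 0 F n, ← subst2_eq_subst F (constantCoeff_X 0) (map_zero _),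
    hF.unit_left, coeff_X]
  simp [Finsupp.single_eq_single_iff, eq_comm]

lemma IsFGL.coeff_single_one {F : MvPowerSeries (Fin 2) R} (hF : IsFGL F) (n : ℕ) :
    coeff (single 1 n) F = if n = 1 then 1 else 0 := by
  classical
  rw [← coeff_subst_zero_X 1 F n, ← subst2_eq_subst F (map_zero _) (constantCoeff_X 1),
    hF.unit_right, coeff_X]
  simp [Finsupp.single_eq_single_iff, eq_comm]

lemma IsFGL.constantCoeff_eq_zero {F : MvPowerSeries (Fin 2) R} (hF : IsFGL F) :
    constantCoeff F = 0 := by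
  simpa using hF.coeff_single_zero 0

def IsFGL.toFormalGroup {F : MvPowerSeries (Fin 2) R} (hF : IsFGL F) :
    FormalGroup R where
  toPowerSeries := F
  zero_constantCoeff := hF.constantCoeff_eq_zero
  lin_coeff_X := by simpa using hF.coeff_single_zero 1
  lin_coeff_Y := by simpa using hF.coeff_single_one 1
  assoc := by
    have h01 := constantCoeff_subst_X_X hF.constantCoeff_eq_zero (0 : Fin 3) 1
    have h12 := constantCoeff_subst_X_X hF.constantCoeff_eq_zero (1 : Fin 3) 2
    have h := hF.assoc
    rw [subst2_eq_subst F (constantCoeff_X 0) (constantCoeff_X 1),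
      subst2_eq_subst F (constantCoeff_X 1) (constantCoeff_X 2),
      subst2_eq_subst F h01 (constantCoeff_X 2), subst2_eq_subst F (constantCoeff_X 0) h12] at h
    exact h

section FormalGroup

variable (G : FormalGroup R)

lemma order_sub_X_add_X : 2 ≤ (G.toPowerSeries - (X 0 + X 1)).order := by
  refine nat_le_order (n := 2) fun d hd => ?_
  have hu : d = single 0 (d 0) + single 1 (d 1) := by ext s; fin_cases s <;> simp
  rw [Finsupp.degree_eq_sum, Fin.sum_univ_two] at hd
  obtain h | h | h : (d 0 = 0 ∧ d 1 = 0) ∨ (d 0 = 1 ∧ d 1 = 0) ∨ (d 0 = 0 ∧ d 1 = 1) := by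
    omega
  all_goals
    rw [hu, h.1, h.2]
    simp [coeff_X, Finsupp.single_eq_single_iff, G.lin_coeff_X, G.lin_coeff_Y,
      G.zero_constantCoeff]

lemma order_subst_sub_add {σ : Type*} {a b : MvPowerSeries σ R} (ha : constantCoeff a = 0)
    (hb : constantCoeff b = 0) : 2 ≤ (G.toPowerSeries.subst ![a, b] - (a + b)).order := by
  have hab := hasSubst_fin_two ha hb
  have hsub : G.toPowerSeries.subst ![a, b] - (a + b)
      = (G.toPowerSeries - (X 0 + X 1)).subst ![a, b] := by
    rw [subst_sub hab, subst_add hab, subst_X hab, subst_X hab]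
    rfl
  rw [hsub]
  refine le_trans ?_ (le_order_subst hab _)
  calc (2 : ℕ∞) = 1 * 2 := by norm_num
    _ ≤ _ := mul_le_mul' (le_iInf (Fin.forall_fin_two.2
        ⟨one_le_order_iff_constCoeff_eq_zero.2 ha, one_le_order_iff_constCoeff_eq_zero.2 hb⟩))
      (order_sub_X_add_X G)

lemma coeff_pow_single_one_add (m : ℕ) :
    coeff (single 0 1 + single 1 (m + 1)) (G.toPowerSeries ^ (m + 2)) = (m + 2 : R) := by
  have hcongr := coeff_pow_mul_pow_congr G.zero_constantCoeff (order_sub_X_add_X G)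
    (map_zero (constantCoeff (σ := Fin 2) (R := R))) (b' := 0) (by simp) (j := 0)
    (d := single 0 1 + single 1 (m + 1)) (i := m + 2)
    (by simp only [map_add, Finsupp.degree_single]; omega)
  have h0 : (single 0 1 + single 1 (m + 1) : Fin 2 →₀ ℕ) 0 = 1 := by simp
  have h1 : (single 0 1 + single 1 (m + 1) : Fin 2 →₀ ℕ) 1 = m + 1 := by simp
  simp only [pow_zero, mul_one] at hcongr
  rw [hcongr, ← MvPolynomial.coe_X, ← MvPolynomial.coe_X, ← MvPolynomial.coe_add,
    ← MvPolynomial.coe_pow, MvPolynomial.coeff_coe, MvPolynomial.coeff_add_pow, h0, h1,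
    if_pos (HasAntidiagonal.mem_antidiagonal.2 (by omega)), Nat.choose_one_right]
  push_cast
  ring

lemma coeff_subst_single_one_add (f : PowerSeries R) (m : ℕ) :
    coeff (single 0 1 + single 1 (m + 1)) (f.subst G.toPowerSeries) =
      ∑ k ∈ range (m + 2), PowerSeries.coeff k f *
          coeff (single 0 1 + single 1 (m + 1)) (G.toPowerSeries ^ k) +
        (m + 2 : R) * PowerSeries.coeff (m + 2) f := by
  rw [coeff_subst_eq_sum_range f G.zero_constantCoeff (N := m + 2)
    (by simp only [map_add, Finsupp.degree_single]; omega), sum_range_succ,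
    coeff_pow_single_one_add, mul_comm]

end FormalGroup

section Cocycle

variable (G : FormalGroup R)

def IsCocycle (E : MvPowerSeries (Fin 2) R) : Prop :=
  E.subst ![G.toPowerSeries.subst ![X 0, X 1], X 2] + E.subst ![X 0, X 1] =
    E.subst ![X 0, G.toPowerSeries.subst ![X 1, X 2]] +
      E.subst ![(X 1 : MvPowerSeries (Fin 3) R), X 2]

lemma coeff_eq_zero_of_isCocycle [IsAddTorsionFree R] {E : MvPowerSeries (Fin 2) R}
    (hcocycle : IsCocycle G E)
    (hlin : ∀ n, coeff (single 0 1 + single 1 (n + 1)) E = 0)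
    {a c : ℕ} (hord : (a + c + 2 : ℕ) ≤ E.order) :
    coeff (single 0 (a + 1) + single 1 (c + 1)) E = 0 := by
  set e : Fin 3 →₀ ℕ := single 0 1 + single 1 a + single 2 (c + 1)
  have he : e.degree ≤ a + c + 2 := by simp only [e, map_add, Finsupp.degree_single]; omega
  have hF := constantCoeff_subst_X_X G.zero_constantCoeff (σ := Fin 3)
  have hF' : ∀ i j : Fin 3,
      2 ≤ (G.toPowerSeries.subst ![(X i : MvPowerSeries (Fin 3) R), X j] - (X i + X j)).order :=
    fun _ _ => order_subst_sub_add G (constantCoeff_X _) (constantCoeff_X _)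
  have hX : ∀ i : Fin 3, 2 ≤ ((X i : MvPowerSeries (Fin 3) R) - X i).order := by simp
  have hL1 : coeff e (E.subst ![G.toPowerSeries.subst ![X 0, X 1], X 2]) =
      (a + 1 : ℕ) • coeff (single 0 (a + 1) + single 1 (c + 1)) E := by
    rw [coeff_subst_congr E hord (hF 0 1) (hF' 0 1) (constantCoeff_X 2) (hX 2) he,
      coeff_subst_X_add_X_X (by decide) (by decide) (by decide), Nat.choose_one_right,
      add_comm 1 a, nsmul_eq_mul]
  have hL2 : coeff e (E.subst ![(X 0 : MvPowerSeries (Fin 3) R), X 1]) = 0 :=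
    coeff_subst_X_X_of_ne (u := 2) (by decide) (by decide) E (by simp [e])
  have hR1 : coeff e
      (E.subst ![X 0, G.toPowerSeries.subst ![(X 1 : MvPowerSeries (Fin 3) R), X 2]]) = 0 := by
    have he' : e = single 1 a + single 2 (c + 1) + single 0 1 := by simp only [e]; abel
    rw [coeff_subst_congr E hord (constantCoeff_X 0) (hX 0) (hF 1 2) (hF' 1 2) he, he',
      coeff_subst_X_X_add_X (by decide) (by decide) (by decide), ← add_assoc, hlin, mul_zero]
  have hR2 : coeff e (E.subst ![(X 1 : MvPowerSeries (Fin 3) R), X 2]) = 0 :=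
    coeff_subst_X_X_of_ne (u := 0) (by decide) (by decide) E (by simp [e])
  have h := congrArg (coeff e) hcocycle
  rw [map_add, map_add, hL1, hL2, hR1, hR2, add_zero, add_zero] at h
  exact (smul_eq_zero.1 h).resolve_left (Nat.succ_ne_zero a)

theorem eq_zero_of_isCocycle [IsAddTorsionFree R] {E : MvPowerSeries (Fin 2) R}
    (hcocycle : IsCocycle G E) (hX : E.subst ![X 0, 0] = (0 : MvPowerSeries (Fin 2) R))
    (hY : E.subst ![0, X 1] = (0 : MvPowerSeries (Fin 2) R))
    (hlin : ∀ n, coeff (single 0 1 + single 1 (n + 1)) E = 0) : E = 0 := by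
  suffices h : ∀ n : ℕ, (n : ℕ∞) ≤ E.order from
    order_eq_top_iff.1 (ENat.eq_top_iff_forall_ge.2 h)
  intro n
  induction n with
  | zero => simp
  | succ n ih =>
    refine nat_le_order fun d hd => ?_
    rcases Nat.lt_succ_iff_lt_or_eq.1 hd with hlt | hdeg
    · exact coeff_of_lt_order (lt_of_lt_of_le (by exact_mod_cast hlt) ih)
    obtain ⟨a, c, rfl⟩ : ∃ a c, d = single 0 a + single 1 c :=
      ⟨d 0, d 1, by ext s; fin_cases s <;> simp⟩
    rcases c with _ | c
    · have h := congrArg (coeff (single 0 a)) hX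
      rwa [coeff_subst_X_zero, map_zero, ← add_zero (single 0 a), ← Finsupp.single_zero 1]
        at h
    rcases a with _ | a
    · have h := congrArg (coeff (single 1 (c + 1))) hY
      rwa [coeff_subst_zero_X, map_zero, ← zero_add (single 1 (c + 1)), ← Finsupp.single_zero 0]
        at h
    simp only [map_add, Finsupp.degree_single] at hdeg
    exact coeff_eq_zero_of_isCocycle G hcocycle hlin
      (by rw [← hdeg] at ih; convert ih using 2; omega)

end Cocycle

section Defect

lemma subst_powerSeries_subst {σ τ : Type*} (f : PowerSeries R) {P : MvPowerSeries σ R}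
    (hP : constantCoeff P = 0) {b : σ → MvPowerSeries τ R} (hb : HasSubst b) :
    (f.subst P).subst b = f.subst (P.subst b) := by
  rw [PowerSeries.subst_def, PowerSeries.subst_def,
    subst_comp_subst_apply (PowerSeries.HasSubst.of_constantCoeff_zero hP).const hb]

noncomputable def addDefect (F : MvPowerSeries (Fin 2) R) (f : PowerSeries R) :
    MvPowerSeries (Fin 2) R :=
  f.subst F - f.subst (X 0 : MvPowerSeries (Fin 2) R) - f.subst (X 1 : MvPowerSeries (Fin 2) R)

lemma addDefect_sub (F : MvPowerSeries (Fin 2) R) (hF : constantCoeff F = 0)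
    (f g : PowerSeries R) : addDefect F (f - g) = addDefect F f - addDefect F g := by
  simp only [addDefect, PowerSeries.subst_sub (PowerSeries.HasSubst.of_constantCoeff_zero hF),
    PowerSeries.subst_sub (PowerSeries.HasSubst.X (S := R) (0 : Fin 2)),
    PowerSeries.subst_sub (PowerSeries.HasSubst.X (S := R) (1 : Fin 2))]
  ring

lemma addDefect_subst {σ : Type*} {F : MvPowerSeries (Fin 2) R} (hF : constantCoeff F = 0)
    (f : PowerSeries R) {a b : MvPowerSeries σ R} (ha : constantCoeff a = 0)
    (hb : constantCoeff b = 0) :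
    (addDefect F f).subst ![a, b] = f.subst (F.subst ![a, b]) - f.subst a - f.subst b := by
  have hab := hasSubst_fin_two ha hb
  rw [addDefect, subst_sub hab, subst_sub hab, subst_powerSeries_subst f hF hab,
    subst_powerSeries_subst f (constantCoeff_X 0) hab,
    subst_powerSeries_subst f (constantCoeff_X 1) hab, subst_X hab, subst_X hab]
  rfl

lemma coeff_addDefect_single_one_add (F : MvPowerSeries (Fin 2) R) (f : PowerSeries R)
    (m : ℕ) :
    coeff (single 0 1 + single 1 (m + 1)) (addDefect F f) =
      coeff (single 0 1 + single 1 (m + 1)) (f.subst F) := by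
  classical
  simp [addDefect, PowerSeries.coeff_subst_single, Finsupp.ext_iff, Fin.forall_fin_two]

variable (G : FormalGroup R)

lemma isCocycle_addDefect (f : PowerSeries R) : IsCocycle G (addDefect G.toPowerSeries f) := by
  simp only [IsCocycle,
    addDefect_subst G.zero_constantCoeff f
      (constantCoeff_subst_X_X G.zero_constantCoeff _ _) (constantCoeff_X _),
    addDefect_subst G.zero_constantCoeff f
      (constantCoeff_X _) (constantCoeff_subst_X_X G.zero_constantCoeff _ _),
    addDefect_subst G.zero_constantCoeff f (constantCoeff_X _) (constantCoeff_X _), G.assoc]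
  ring

lemma addDefect_subst_X_zero {f : PowerSeries R} (hf : PowerSeries.constantCoeff f = 0) :
    (addDefect G.toPowerSeries f).subst ![X 0, 0] = (0 : MvPowerSeries (Fin 2) R) := by
  rw [addDefect_subst G.zero_constantCoeff f (constantCoeff_X 0) (map_zero _),
    G.add_zero (PowerSeries.HasSubst.X 0), PowerSeries.subst_zero_of_constantCoeff_zero hf]
  ring

lemma addDefect_subst_zero_X {f : PowerSeries R} (hf : PowerSeries.constantCoeff f = 0) :
    (addDefect G.toPowerSeries f).subst ![0, X 1] = (0 : MvPowerSeries (Fin 2) R) := by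
  rw [addDefect_subst G.zero_constantCoeff f (map_zero _) (constantCoeff_X 1),
    G.zero_add (PowerSeries.HasSubst.X 1), PowerSeries.subst_zero_of_constantCoeff_zero hf]
  ring

theorem eq_zero_of_addDefect_eq_zero [IsAddTorsionFree R] (G : FormalGroup R)
    {f : PowerSeries R} (hf : addDefect G.toPowerSeries f = 0)
    (h0 : PowerSeries.constantCoeff f = 0) (h1 : PowerSeries.coeff 1 f = 0) : f = 0 := by
  ext k
  induction k using Nat.strong_induction_on with
  | _ k ih =>
    match k, ih with
    | 0, _ => simpa using h0
    | 1, _ => simpa using h1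
    | m + 2, ih =>
      have h := congrArg (coeff (single 0 1 + single 1 (m + 1))) hf
      rw [coeff_addDefect_single_one_add, coeff_subst_single_one_add,
        sum_eq_zero fun k hk => by rw [ih k (mem_range.1 hk), map_zero, zero_mul], zero_add,
        map_zero, ← Nat.cast_ofNat, ← Nat.cast_add, ← nsmul_eq_mul] at h
      simpa using (smul_eq_zero.1 h).resolve_left (by omega)

end Defect

section Logarithm

variable [Algebra ℚ R]

/-- `ℓ_(n+2)` is chosen so that the coefficient
`(n + 2) ℓ_(n+2) + ∑_(k < n+2) ℓ_k [X Y^(n+1)] F^k` of `X Y^(n+1)` in `ℓ(F)` vanishes. -/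
noncomputable def logCoeff (F : MvPowerSeries (Fin 2) R) : ℕ → R
  | 0 => 0
  | 1 => 1
  | n + 2 => -(n + 2 : ℚ)⁻¹ •
      ∑ k : Fin (n + 2), logCoeff F k * coeff (single 0 1 + single 1 (n + 1)) (F ^ (k : ℕ))

noncomputable def log (F : MvPowerSeries (Fin 2) R) : PowerSeries R :=
  PowerSeries.mk (logCoeff F)

@[simp]
lemma constantCoeff_log (F : MvPowerSeries (Fin 2) R) : PowerSeries.constantCoeff (log F) = 0 := by
  simp [log, logCoeff]

@[simp]
lemma coeff_one_log (F : MvPowerSeries (Fin 2) R) : PowerSeries.coeff 1 (log F) = 1 := by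
  simp [log, logCoeff]

lemma coeff_subst_log (G : FormalGroup R) (m : ℕ) :
    coeff (single 0 1 + single 1 (m + 1)) ((log G.toPowerSeries).subst G.toPowerSeries) = 0 := by
  rw [coeff_subst_single_one_add]
  simp only [log, PowerSeries.coeff_mk]
  rw [logCoeff, ← Fin.sum_univ_eq_sum_range (fun k => logCoeff G.toPowerSeries k *
    coeff (single 0 1 + single 1 (m + 1)) (G.toPowerSeries ^ k)), neg_smul, mul_neg,
    Algebra.smul_def, ← mul_assoc,
    show (m + 2 : R) = algebraMap ℚ R (m + 2) by simp [map_ofNat], ← map_mul,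
    mul_inv_cancel₀ (by positivity), map_one, one_mul, add_neg_cancel]

theorem addDefect_log (G : FormalGroup R) :
    addDefect G.toPowerSeries (log G.toPowerSeries) = 0 :=
  have := IsAddTorsionFree.of_module_rat R
  eq_zero_of_isCocycle G (isCocycle_addDefect G _)
    (addDefect_subst_X_zero G (constantCoeff_log _))
    (addDefect_subst_zero_X G (constantCoeff_log _)) fun m => by
      rw [coeff_addDefect_single_one_add, coeff_subst_log]

theorem existsUnique_log (G : FormalGroup R) :
    ∃! ℓ : PowerSeries R, PowerSeries.constantCoeff ℓ = 0 ∧ PowerSeries.coeff 1 ℓ = 1 ∧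
      ℓ.subst G.toPowerSeries = ℓ.subst (X 0 : MvPowerSeries (Fin 2) R) +
        ℓ.subst (X 1 : MvPowerSeries (Fin 2) R) := by
  have := IsAddTorsionFree.of_module_rat R
  have hadd : ∀ f : PowerSeries R, addDefect G.toPowerSeries f = 0 ↔
      f.subst G.toPowerSeries = f.subst (X 0 : MvPowerSeries (Fin 2) R) +
        f.subst (X 1 : MvPowerSeries (Fin 2) R) := fun f => by
    rw [addDefect, sub_sub, sub_eq_zero]
  refine ⟨log G.toPowerSeries, ⟨constantCoeff_log _, coeff_one_log _,
    (hadd _).1 (addDefect_log G)⟩, fun g ⟨hg0, hg1, hg⟩ => ?_⟩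
  refine sub_eq_zero.1 (eq_zero_of_addDefect_eq_zero G ?_ ?_ ?_)
  · rw [addDefect_sub _ G.zero_constantCoeff, (hadd g).2 hg, addDefect_log, sub_zero]
  · simp [hg0]
  · simp [hg1]

end Logarithm

/-- Over a commutative `ℚ`-algebra `R`, every formal group law `F` admits a unique
power series `ℓ` with constant term `0` and linear coefficient `1` such that
`ℓ(F(X,Y)) = ℓ(X) + ℓ(Y)`, i.e. `F` is strictly isomorphic to the additive formal group law. -/
theorem statement6 (R : Type*) [CommRing R] [Algebra ℚ R]
    (F : MvPowerSeries (Fin 2) R) (hF : IsFGL F) :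
    ∃! ℓ : PowerSeries R,
      PowerSeries.constantCoeff ℓ = 0 ∧ PowerSeries.coeff 1 ℓ = 1 ∧
        subst1 ℓ F = subst1 ℓ (MvPowerSeries.X 0 : MvPowerSeries (Fin 2) R) +
          subst1 ℓ (MvPowerSeries.X 1 : MvPowerSeries (Fin 2) R) := by
  simp only [subst1_eq_subst _ hF.constantCoeff_eq_zero, subst1_eq_subst _ (constantCoeff_X _)]
  exact existsUnique_log hF.toFormalGroup

end FGL
end

section
/- Let n ≥ 2 be an integer. The greatest common divisor of the binomial coefficients C(n,i) for 0 < i < n equals p if n is a power of a prime p (n = p^k with k ≥ 1), and equals 1 otherwise. Consequently, with d = p when n is a power of the prime p and d = 1 otherwise, the polynomial (X+Y)^n − X^n − Y^n ∈ ℤ[X,Y] is d times a polynomial with integer coefficients, namely d·C_n(X,Y). -/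
open Finset MvPolynomial

theorem Nat.Ioo_zero_eq_Icc_one_sub_one (n : ℕ) : Ioo 0 n = Icc 1 (n - 1) := by
  ext i
  simp only [mem_Ioo, mem_Icc]
  omega

theorem add_pow_sub_pow_sub_pow_eq_sum {R : Type*} [CommRing R] (x y : R) {n : ℕ} (hn : n ≠ 0) :
    (x + y) ^ n - x ^ n - y ^ n = ∑ i ∈ Ioo 0 n, x ^ i * y ^ (n - i) * n.choose i := by
  have hrange : range (n + 1) = insert 0 (insert n (Ioo 0 n)) := by
    ext i
    simp only [mem_range, mem_insert, mem_Ioo]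
    omega
  rw [add_pow, hrange, sum_insert (by simp [Ne.symm hn]), sum_insert (by simp)]
  simp only [pow_zero, Nat.sub_zero, Nat.choose_zero_right, Nat.sub_self, Nat.choose_self,
    Nat.cast_one, mul_one, one_mul]
  ring

theorem gcd_choose_dvd_add_pow_sub_pow_sub_pow {R : Type*} [CommRing R] (x y : R) {n : ℕ}
    (hn : n ≠ 0) : (((Ioo 0 n).gcd n.choose : ℕ) : R) ∣ (x + y) ^ n - x ^ n - y ^ n := by
  rw [add_pow_sub_pow_sub_pow_eq_sum x y hn]
  exact dvd_sum fun i hi => dvd_mul_of_dvd_right (Nat.cast_dvd_cast (gcd_dvd hi)) _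

/-- For `n ≥ 2`, the gcd of the binomial coefficients `C(n,i)` for `0 < i < n` is `p` when
`n = p^k` is a power of a prime `p` (with `k ≥ 1`), and is `1` otherwise.  Consequently
`(X+Y)^n − X^n − Y^n ∈ ℤ[X,Y]` is `d` times an integral polynomial `C_n(X,Y)`, where `d = p`
in the prime-power case and `d = 1` otherwise. -/
theorem statement8 (n : ℕ) (hn : 2 ≤ n) :
    (∀ p k : ℕ, p.Prime → 1 ≤ k → n = p ^ k →
      (Finset.Ioo 0 n).gcd n.choose = p ∧
      ∃ C : MvPolynomial (Fin 2) ℤ,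
        (MvPolynomial.X 0 + MvPolynomial.X 1) ^ n -
            MvPolynomial.X 0 ^ n - MvPolynomial.X 1 ^ n = (p : MvPolynomial (Fin 2) ℤ) * C) ∧
    ((¬ ∃ p k : ℕ, p.Prime ∧ 1 ≤ k ∧ n = p ^ k) →
      (Finset.Ioo 0 n).gcd n.choose = 1 ∧
      ∃ C : MvPolynomial (Fin 2) ℤ,
        (MvPolynomial.X 0 + MvPolynomial.X 1) ^ n -
            MvPolynomial.X 0 ^ n - MvPolynomial.X 1 ^ n = (1 : ℤ) • C) := by
  rw [Nat.Ioo_zero_eq_Icc_one_sub_one]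
  refine ⟨fun p k hp hk hnpk => ?_, fun hnpp => ⟨?_, _, (one_smul ℤ _).symm⟩⟩
  · have hpow : IsPrimePow n := (isPrimePow_nat_iff n).2 ⟨p, k, hp, hk, hnpk.symm⟩
    have hgcd : (Icc 1 (n - 1)).gcd n.choose = p := by
      rw [Choose.gcd_choose_eq_minFac_of_isPrimePow hpow, hnpk, hp.pow_minFac (by omega)]
    obtain ⟨C, hC⟩ := gcd_choose_dvd_add_pow_sub_pow_sub_pow (X 0 : MvPolynomial (Fin 2) ℤ) (X 1)
      hpow.ne_zero
    rw [Nat.Ioo_zero_eq_Icc_one_sub_one, hgcd] at hC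
    exact ⟨hgcd, C, hC⟩
  · refine Choose.gcd_choose_eq_one_of_not_isPrimePow hn fun hpow => hnpp ?_
    obtain ⟨p, k, hp, hk, hpk⟩ := (isPrimePow_nat_iff n).1 hpow
    exact ⟨p, k, hp, hk, hpk.symm⟩
end

section
/- Let p be an odd prime and t a nonzero integer. Let the group ℤ_p^× of p-adic units act on the additive group A = ℚ_p/ℤ_p by a·(x + ℤ_p) = (a^t·x) + ℤ_p, and let A^{inv} = { x ∈ A : a·x = x for all a ∈ ℤ_p^× } be the subgroup of invariants. If (p−1) does not divide t, then A^{inv} = 0. If (p−1) divides t, write t = k(p−1) with k = p^r·k_0 and p ∤ k_0; then A^{inv} is a cyclic group of order p^{r+1}. -/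
open scoped Classical

/-- The image of `ℤ_[p]` in `ℚ_[p]`, as an additive subgroup. -/
noncomputable def ZpInQp (p : ℕ) [Fact p.Prime] : AddSubgroup ℚ_[p] :=
  (PadicInt.Coe.ringHom (p := p)).range.toAddSubgroup

/-- The additive group `ℚ_p/ℤ_p`, i.e. `ℤ/p^∞`. -/
abbrev QpModZp (p : ℕ) [Fact p.Prime] := ℚ_[p] ⧸ ZpInQp p

/-- `x ∈ ℚ_p/ℤ_p` is invariant for the action of `ℤ_p^×` twisted by `t`,
where a unit `a` acts by `a·(y + ℤ_p) = a^t·y + ℤ_p`. -/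
def TwistedInvariant (p : ℕ) [Fact p.Prime] (t : ℤ) (x : QpModZp p) : Prop :=
  ∀ a : ℤ_[p]ˣ, ∀ y : ℚ_[p], x = QuotientAddGroup.mk y →
    (QuotientAddGroup.mk ((((a : ℤ_[p]) : ℚ_[p]) ^ t) * y) : QpModZp p) = x

/-!
Write `x = y + ℤ_p` with `‖y‖ = p^n`. Then `a` fixes `x` iff `a^t ≡ 1 mod p^n`, and since
`ℤ_p^× → (ℤ/p^n)^×` is onto, `x` is invariant iff the exponent of `(ℤ/p^n)^×`, the Carmichael
number `λ(p^n)`, divides `t`. For odd `p` that group is cyclic, so `λ(p^n) = φ(p^n) = p^{n-1}(p-1)`,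
which divides `p^r k₀ (p-1)` exactly when `n ≤ r + 1`. Hence the invariants are the
`p^{r+1}`-torsion of `ℚ_p/ℤ_p`, a cyclic group generated by the class of `p^{-(r+1)}`.
-/

open ArithmeticFunction QuotientAddGroup

theorem pow_dvd_pow_mul_iff_le {M : Type*} [CommMonoidWithZero M] [IsCancelMulZero M] {p k : M}
    (hp : p ≠ 0) (hk : ¬ p ∣ k) {m r : ℕ} :
    p ^ m ∣ p ^ r * k ↔ m ≤ r := by
  refine ⟨fun h => ?_, fun h => (pow_dvd_pow p h).mul_right k⟩
  by_contra! hrm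
  have : p ^ r * p ∣ p ^ r * k := (pow_succ p r ▸ pow_dvd_pow p hrm).trans h
  exact hk ((mul_dvd_mul_iff_left (pow_ne_zero r hp)).mp this)

theorem natCast_totient_prime_pow_dvd_iff {p : ℕ} (hp : p.Prime) {k₀ : ℤ} (hk₀ : ¬ (p : ℤ) ∣ k₀)
    (n r : ℕ) : (((p ^ n).totient : ℕ) : ℤ) ∣ (p : ℤ) ^ r * k₀ * ((p : ℤ) - 1) ↔ n ≤ r + 1 := by
  rcases n with _ | n
  · simp
  have hp1 : (p : ℤ) - 1 ≠ 0 := by have := hp.two_le; omega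
  rw [Nat.totient_prime_pow_succ hp, Nat.cast_mul, Nat.cast_sub hp.one_le, Nat.cast_pow,
    Nat.cast_one, mul_dvd_mul_iff_right hp1, pow_dvd_pow_mul_iff_le
    (Int.natCast_ne_zero.mpr hp.ne_zero) hk₀, Nat.add_le_add_iff_right]

namespace PadicInt

variable {p : ℕ} [Fact p.Prime]

theorem coe_units_zpow (a : ℤ_[p]ˣ) (t : ℤ) :
    (((a ^ t : ℤ_[p]ˣ) : ℤ_[p]) : ℚ_[p]) = ((a : ℤ_[p]) : ℚ_[p]) ^ t := by
  have := congrArg Units.val (map_zpow (Units.map (Coe.ringHom (p := p)).toMonoidHom) a t)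
  rwa [Units.val_zpow_eq_zpow_val] at this

theorem pow_dvd_sub_iff_toZModPow_eq {n : ℕ} {x y : ℤ_[p]} :
    (p : ℤ_[p]) ^ n ∣ x - y ↔ toZModPow n x = toZModPow n y := by
  rw [← Ideal.mem_span_singleton, ← ker_toZModPow, RingHom.mem_ker, map_sub, sub_eq_zero]

theorem units_map_toZModPow_surjective (n : ℕ) :
    Function.Surjective (Units.map (toZModPow (p := p) n).toMonoidHom) := by
  rcases n with _ | n
  · have : Subsingleton (ZMod (p ^ 0)) := by rw [pow_zero]; infer_instance
    exact fun u => ⟨1, Units.ext (Subsingleton.elim _ _)⟩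
  have : Nontrivial (ZMod (p ^ (n + 1))) :=
    ZMod.nontrivial_iff.mpr (Nat.one_lt_pow n.succ_ne_zero (Fact.out : p.Prime).one_lt).ne'
  exact IsLocalRing.surjective_units_map_of_local_ringHom _ (ZMod.ringHom_surjective _)
    (IsLocalHom.of_surjective _ (ZMod.ringHom_surjective _))

theorem forall_pow_dvd_zpow_sub_one_iff (n : ℕ) (t : ℤ) :
    (∀ a : ℤ_[p]ˣ, (p : ℤ_[p]) ^ n ∣ ((a ^ t : ℤ_[p]ˣ) : ℤ_[p]) - 1) ↔
      (carmichael (p ^ n) : ℤ) ∣ t := by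
  have : NeZero (p ^ n) := ⟨pow_ne_zero _ (Fact.out : p.Prime).ne_zero⟩
  rw [carmichael_eq_exponent', Group.exponent_dvd_iff_forall_zpow_eq_one,
    (units_map_toZModPow_surjective n).forall]
  refine forall_congr' fun a => ?_
  rw [pow_dvd_sub_iff_toZModPow_eq, map_one, ← map_zpow, Units.ext_iff]
  rfl

end PadicInt

namespace QpModZp

variable {p : ℕ} [Fact p.Prime]

theorem mem_ZpInQp_iff {z : ℚ_[p]} : z ∈ ZpInQp p ↔ ‖z‖ ≤ 1 :=
  ⟨by rintro ⟨w, rfl⟩; exact w.norm_le_one, fun h => ⟨⟨z, h⟩, rfl⟩⟩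

theorem mk_eq_mk_iff {y z : ℚ_[p]} : (mk y : QpModZp p) = mk z ↔ ‖z - y‖ ≤ 1 := by
  rw [QuotientAddGroup.eq, neg_add_eq_sub, mem_ZpInQp_iff]

theorem mk_eq_zero_iff {y : ℚ_[p]} : (mk y : QpModZp p) = 0 ↔ ‖y‖ ≤ 1 := by
  rw [QuotientAddGroup.eq_zero_iff, mem_ZpInQp_iff]

theorem exists_mk_eq_and_norm_eq_pow (x : QpModZp p) :
    ∃ (y : ℚ_[p]) (n : ℕ), x = mk y ∧ ‖y‖ = (p : ℝ) ^ n := by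
  obtain ⟨y, rfl⟩ := mk_surjective x
  by_cases hy : ‖y‖ ≤ 1
  · exact ⟨1, 0, (mk_eq_zero_iff.mpr hy).trans (mk_eq_zero_iff.mpr (by simp)).symm, by simp⟩
  have hy0 : y ≠ 0 := by rintro rfl; simp at hy
  have hv : 0 ≤ -y.valuation := by
    rw [Padic.norm_le_one_iff_val_nonneg] at hy
    omega
  refine ⟨y, (-y.valuation).toNat, rfl, ?_⟩
  rw [Padic.norm_eq_zpow_neg_valuation hy0, ← zpow_natCast, Int.toNat_of_nonneg hv]

theorem pow_nsmul_mk_eq_zero_iff {y : ℚ_[p]} {n : ℕ} (hy : ‖y‖ = (p : ℝ) ^ n) (m : ℕ) :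
    p ^ m • (mk y : QpModZp p) = 0 ↔ n ≤ m := by
  have hp : (1 : ℝ) < p := by exact_mod_cast (Fact.out : p.Prime).one_lt
  rw [← mk_nsmul, nsmul_eq_mul, mk_eq_zero_iff, norm_mul, hy, Nat.cast_pow, norm_pow,
    Padic.norm_p, inv_pow, inv_mul_le_iff₀ (by positivity), mul_one, pow_le_pow_iff_right₀ hp]

theorem pow_nsmul_eq_zero_iff_exists_zsmul (N : ℕ) (x : QpModZp p) :
    p ^ N • x = 0 ↔ ∃ m : ℤ, x = m • (mk ((p : ℚ_[p]) ^ N)⁻¹ : QpModZp p) := by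
  have hp : (p : ℚ_[p]) ≠ 0 := by exact_mod_cast (Fact.out : p.Prime).ne_zero
  constructor
  · intro h
    obtain ⟨y, rfl⟩ := mk_surjective x
    rw [← mk_nsmul, nsmul_eq_mul, mk_eq_zero_iff, Nat.cast_pow] at h
    set z : ℤ_[p] := ⟨p ^ N * y, h⟩
    obtain ⟨w, hw⟩ := Ideal.mem_span_singleton.mp (z.appr_spec N)
    have hwQ : (z : ℚ_[p]) - (z.appr N : ℚ_[p]) = p ^ N * (w : ℚ_[p]) := by
      exact_mod_cast congrArg ((↑) : ℤ_[p] → ℚ_[p]) hw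
    have hz : (z : ℚ_[p]) = p ^ N * y := rfl
    have hdiff : ((z.appr N : ℤ) : ℚ_[p]) * ((p : ℚ_[p]) ^ N)⁻¹ - y = -(w : ℚ_[p]) := by
      field_simp
      push_cast
      linear_combination -hwQ + hz
    refine ⟨z.appr N, ?_⟩
    rw [← mk_zsmul, zsmul_eq_mul, mk_eq_mk_iff, hdiff, norm_neg]
    exact w.norm_le_one
  · rintro ⟨m, rfl⟩
    rw [smul_comm, ← mk_nsmul, nsmul_eq_mul, Nat.cast_pow, mul_inv_cancel₀ (pow_ne_zero N hp),
      mk_eq_zero_iff.mpr (by simp), smul_zero]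

theorem mk_mul_eq_mk_mul {c : ℤ_[p]} {y y' : ℚ_[p]} (h : (mk y : QpModZp p) = mk y') :
    (mk (c * y) : QpModZp p) = mk (c * y') := by
  rw [mk_eq_mk_iff] at h ⊢
  rw [← mul_sub, norm_mul]
  exact mul_le_one₀ c.norm_le_one (norm_nonneg _) h

theorem mk_mul_eq_mk_iff {c : ℤ_[p]} {y : ℚ_[p]} {n : ℕ} (hy : ‖y‖ = (p : ℝ) ^ n) :
    (mk (c * y) : QpModZp p) = mk y ↔ (p : ℤ_[p]) ^ n ∣ c - 1 := by
  have hp : (0 : ℝ) < p := by exact_mod_cast (Fact.out : p.Prime).pos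
  rw [mk_eq_mk_iff, ← norm_neg, neg_sub, ← sub_one_mul, norm_mul, hy, ← PadicInt.coe_one,
    ← PadicInt.coe_sub, PadicInt.padic_norm_e_of_padicInt, ← Ideal.mem_span_singleton,
    ← PadicInt.norm_le_pow_iff_mem_span_pow, zpow_neg, zpow_natCast, ← le_div_iff₀ (by positivity),
    one_div]

theorem twistedInvariant_mk_iff {t : ℤ} {y : ℚ_[p]} :
    TwistedInvariant p t (mk y) ↔
      ∀ a : ℤ_[p]ˣ, (mk (((a ^ t : ℤ_[p]ˣ) : ℤ_[p]) * y) : QpModZp p) = mk y := by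
  refine ⟨fun h a => ?_, fun h a y' hy' => ?_⟩
  · rw [PadicInt.coe_units_zpow]
    exact h a y rfl
  · rw [← PadicInt.coe_units_zpow, ← mk_mul_eq_mk_mul hy', h a]

theorem twistedInvariant_mk_iff_carmichael_dvd {t : ℤ} {y : ℚ_[p]} {n : ℕ}
    (hy : ‖y‖ = (p : ℝ) ^ n) :
    TwistedInvariant p t (mk y) ↔ (carmichael (p ^ n) : ℤ) ∣ t := by
  simp only [twistedInvariant_mk_iff, mk_mul_eq_mk_iff hy, PadicInt.forall_pow_dvd_zpow_sub_one_iff]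

theorem eq_zero_of_twistedInvariant (hp2 : p ≠ 2) {t : ℤ} (ht : ¬ ((p : ℤ) - 1) ∣ t)
    {x : QpModZp p} (hx : TwistedInvariant p t x) : x = 0 := by
  obtain ⟨y, n, rfl, hy⟩ := exists_mk_eq_and_norm_eq_pow x
  rw [twistedInvariant_mk_iff_carmichael_dvd hy, carmichael_pow_of_prime_ne_two n Fact.out hp2]
    at hx
  rcases n with _ | n
  · exact mk_eq_zero_iff.mpr (by simp [hy])
  · rw [Nat.totient_prime_pow_succ Fact.out, Nat.cast_mul,
      Nat.cast_sub (Fact.out : p.Prime).one_le, Nat.cast_one] at hx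
    exact absurd ((Dvd.intro_left _ rfl).trans hx) ht

theorem twistedInvariant_iff_pow_nsmul_eq_zero (hp2 : p ≠ 2) {k₀ : ℤ} (hk₀ : ¬ (p : ℤ) ∣ k₀)
    (r : ℕ) (x : QpModZp p) :
    TwistedInvariant p ((p : ℤ) ^ r * k₀ * ((p : ℤ) - 1)) x ↔ p ^ (r + 1) • x = 0 := by
  obtain ⟨y, n, rfl, hy⟩ := exists_mk_eq_and_norm_eq_pow x
  rw [twistedInvariant_mk_iff_carmichael_dvd hy, carmichael_pow_of_prime_ne_two n Fact.out hp2,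
    natCast_totient_prime_pow_dvd_iff Fact.out hk₀, pow_nsmul_mk_eq_zero_iff hy]

end QpModZp

theorem statement14_general (p : ℕ) [Fact p.Prime] (hodd : Odd p) (t : ℤ) :
    (¬ ((p : ℤ) - 1) ∣ t → ∀ x : QpModZp p, TwistedInvariant p t x → x = 0) ∧
    (∀ (k k₀ : ℤ) (r : ℕ), t = k * ((p : ℤ) - 1) → k = (p : ℤ) ^ r * k₀ → ¬ (p : ℤ) ∣ k₀ →
      ∃ x₀ : QpModZp p, TwistedInvariant p t x₀ ∧ addOrderOf x₀ = p ^ (r + 1) ∧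
        ∀ x : QpModZp p, TwistedInvariant p t x ↔ ∃ m : ℤ, x = m • x₀) := by
  have hp2 : p ≠ 2 := by rintro rfl; exact absurd hodd (by decide)
  refine ⟨fun ht _ => QpModZp.eq_zero_of_twistedInvariant hp2 ht, ?_⟩
  rintro k k₀ r rfl rfl hk₀
  have hy₀ : ‖((p : ℚ_[p]) ^ (r + 1))⁻¹‖ = (p : ℝ) ^ (r + 1) := by
    rw [norm_inv, norm_pow, Padic.norm_p, inv_pow, inv_inv]
  have hkilled := QpModZp.pow_nsmul_mk_eq_zero_iff hy₀
  have hinv := QpModZp.twistedInvariant_iff_pow_nsmul_eq_zero hp2 hk₀ r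
  refine ⟨mk ((p : ℚ_[p]) ^ (r + 1))⁻¹, ?_, ?_, fun x => ?_⟩
  · exact (hinv _).mpr ((hkilled _).mpr le_rfl)
  · exact addOrderOf_eq_prime_pow ((hkilled r).not.mpr (by omega)) ((hkilled _).mpr le_rfl)
  · rw [hinv, QpModZp.pow_nsmul_eq_zero_iff_exists_zsmul]

/-- Let `p` be an odd prime and `t` a nonzero integer, and let `ℤ_p^×` act on
`A = ℚ_p/ℤ_p` by `a·x = a^t·x`.  If `(p−1) ∤ t` then the invariants vanish; if
`t = k(p−1)` with `k = p^r·k₀` and `p ∤ k₀`, the invariants form a cyclic group of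
order `p^{r+1}`. -/
theorem statement14 (p : ℕ) [Fact p.Prime] (hodd : Odd p) (t : ℤ) (ht : t ≠ 0) :
    (¬ ((p : ℤ) - 1) ∣ t → ∀ x : QpModZp p, TwistedInvariant p t x → x = 0) ∧
    (∀ (k k₀ : ℤ) (r : ℕ), t = k * ((p : ℤ) - 1) → k = (p : ℤ) ^ r * k₀ → ¬ (p : ℤ) ∣ k₀ →
      ∃ x₀ : QpModZp p, TwistedInvariant p t x₀ ∧ addOrderOf x₀ = p ^ (r + 1) ∧
        ∀ x : QpModZp p, TwistedInvariant p t x ↔ ∃ m : ℤ, x = m • x₀) :=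
  statement14_general p hodd t
end
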